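/- For every λ < 2, the function ψ(z) = √2(2-λ)/(4 sinh((2-λ)|z|/4 + c)), with c defined by tanh c = (2-λ)/2, satisfies ∫_ℝ ψ(z)² dz = λ. -/

import Mathlib

/-! Since `1 / sinh² u = -(coth u)'`, the integral over `(0, ∞)` of `1 / sinh² (a x + b)`
is `(coth b - 1) / a`. For ψ this gives `∫ ψ² = (2 - λ)(coth c - 1)`, and the choice of `c`
makes `coth c = 2 / (2 - λ)`, so the integral is `λ`. -/

open MeasureTheory Real Filter Set Topology

namespace Real

lemma cosh_div_sinh_eq_one_add {t : ℝ} (ht : t ≠ 0) :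
    cosh t / sinh t = 1 + 2 / (exp (2 * t) - 1) := by
  have hsinh : sinh t ≠ 0 := sinh_ne_zero.mpr ht
  have hexp : exp (2 * t) - 1 ≠ 0 := by
    rw [sub_ne_zero, Ne, exp_eq_one_iff]; positivity
  rw [eq_add_of_sub_eq' (div_sub_one hsinh), cosh_sub_sinh, add_right_inj,
    div_eq_div_iff hsinh hexp, sinh_eq,
    show 2 * t = t + -t + t + t by ring, exp_add, exp_add, exp_add, exp_neg]
  field_simp

lemma tendsto_cosh_div_sinh_atTop : Tendsto (fun t => cosh t / sinh t) atTop (𝓝 1) := by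
  have hden : Tendsto (fun t => exp (2 * t) - 1) atTop atTop :=
    tendsto_atTop_add_const_right _ _
      (tendsto_exp_atTop.comp (tendsto_id.const_mul_atTop two_pos))
  have hlim : Tendsto (fun t => 1 + 2 / (exp (2 * t) - 1)) atTop (𝓝 (1 + 0)) :=
    (tendsto_const_nhds.div_atTop hden).const_add 1
  rw [add_zero] at hlim
  refine hlim.congr' ?_
  filter_upwards [eventually_gt_atTop 0] with t ht
  exact (cosh_div_sinh_eq_one_add ht.ne').symm

lemma hasDerivAt_cosh_div_sinh {x : ℝ} (hx : sinh x ≠ 0) :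
    HasDerivAt (fun t => cosh t / sinh t) (-(sinh x ^ 2)⁻¹) x := by
  refine ((hasDerivAt_cosh x).div (hasDerivAt_sinh x) hx).congr_deriv ?_
  field_simp
  linear_combination -cosh_sq_sub_sinh_sq x

end Real

theorem integral_Ioi_inv_sinh_sq_affine {a b : ℝ} (ha : 0 < a) (hb : 0 < b) :
    ∫ x in Ioi 0, (sinh (a * x + b) ^ 2)⁻¹ = (cosh b / sinh b - 1) / a := by
  have harg_pos : ∀ x ∈ Ici (0 : ℝ), 0 < a * x + b := fun x hx => by
    have : 0 ≤ a * x := mul_nonneg ha.le hx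
    linarith
  have hderiv : ∀ x ∈ Ici (0 : ℝ), HasDerivAt
      (fun x => -(cosh (a * x + b) / sinh (a * x + b)) / a) (sinh (a * x + b) ^ 2)⁻¹ x := by
    intro x hx
    have harg : HasDerivAt (fun x => a * x + b) a x := by
      simpa using ((hasDerivAt_id x).const_mul a).add_const b
    refine (((hasDerivAt_cosh_div_sinh (sinh_pos_iff.mpr (harg_pos x hx)).ne').comp x
      harg).neg.div_const a).congr_deriv ?_
    field_simp
  have hlim : Tendsto (fun x => -(cosh (a * x + b) / sinh (a * x + b)) / a) atTop
      (𝓝 (-1 / a)) :=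
    (tendsto_cosh_div_sinh_atTop.comp (tendsto_atTop_add_const_right _ b
      (tendsto_id.const_mul_atTop ha))).neg.div_const a
  rw [integral_Ioi_of_hasDerivAt_of_nonneg' hderiv (fun _ _ => by positivity) hlim]
  simp only [mul_zero, zero_add]
  ring

theorem HS_density_normalization_general (lam c : ℝ) (h2 : lam < 2)
    (hc : 0 < c) (htanh : Real.tanh c = (2 - lam) / 2) :
    ∫ z : ℝ, (Real.sqrt 2 * (2 - lam) / (4 * Real.sinh ((2 - lam) * |z| / 4 + c)))^2 = lam := by
  have hlam : 0 < 2 - lam := by linarith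
  have hcoth : cosh c / sinh c = 2 / (2 - lam) := by
    rw [← inv_div, ← tanh_eq_sinh_div_cosh, htanh, inv_div]
  have hintegrand : ∀ x : ℝ,
      (Real.sqrt 2 * (2 - lam) / (4 * Real.sinh ((2 - lam) * x / 4 + c)))^2
        = (2 - lam) ^ 2 / 8 * (sinh ((2 - lam) / 4 * x + c) ^ 2)⁻¹ := fun x => by
    rw [mul_div_right_comm (2 - lam) x 4, div_pow, mul_pow, mul_pow, sq_sqrt zero_le_two]
    ring
  rw [integral_comp_abs
      (f := fun x => (Real.sqrt 2 * (2 - lam) / (4 * Real.sinh ((2 - lam) * x / 4 + c)))^2),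
    funext hintegrand, integral_const_mul, integral_Ioi_inv_sinh_sq_affine (by positivity) hc,
    hcoth]
  field_simp
  ring

theorem HS_density_normalization (lam c : ℝ) (h0 : 0 ≤ lam) (h2 : lam < 2)
    (hc : 0 < c) (htanh : Real.tanh c = (2 - lam) / 2) :
    ∫ z : ℝ, (Real.sqrt 2 * (2 - lam) / (4 * Real.sinh ((2 - lam) * |z| / 4 + c)))^2 = lam :=
  HS_density_normalization_general lam c h2 hc htanh
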